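/- Generalized Singleton bound: let M = (ρ, E) be a matroid with n = |E|, k = ρ(E) > 0, d = min{|X| : ρ(E \ X) < k}, and suppose M has (r, δ)-locality, meaning for every x ∈ E there exists S ⊆ E with x ∈ S, |S| ≤ r + δ − 1, and min{|X| : X ⊆ S, ρ(S \ X) < ρ(S)} ≥ δ, where 0 < r ≤ k and δ ≥ 2. Then d ≤ n − k + 1 − (⌈k/r⌉ − 1)(δ − 1). -/
import Mathlib


open Finset

structure FinMatroid (α : Type*) [DecidableEq α] where
  E : Finset α
  rk : Finset α → ℕ
  rk_le_card : ∀ X, X ⊆ E → rk X ≤ X.card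
  rk_mono : ∀ X Y, X ⊆ Y → Y ⊆ E → rk X ≤ rk Y
  rk_submod : ∀ X Y, X ⊆ E → Y ⊆ E → rk (X ∪ Y) + rk (X ∩ Y) ≤ rk X + rk Y

namespace FinMatroid

variable {α : Type*} [DecidableEq α]

/-- Nullity: η(X) = |X| − ρ(X). -/
def eta (M : FinMatroid α) (X : Finset α) : ℕ := X.card - M.rk X

/-- A circuit is a minimal dependent set. -/
def Circuit (M : FinMatroid α) (C : Finset α) : Prop :=
  C ⊆ M.E ∧ M.rk C < C.card ∧ ∀ Y, Y ⊂ C → M.rk Y = Y.card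

/-- A cyclic set is a (possibly empty) union of circuits. -/
def Cyclic (M : FinMatroid α) (X : Finset α) : Prop :=
  X ⊆ M.E ∧ ∀ x ∈ X, ∃ C, M.Circuit C ∧ C ⊆ X ∧ x ∈ C

/-- Closure: cl(X) = {x ∈ E : ρ(X ∪ {x}) = ρ(X)}. -/
def cl (M : FinMatroid α) (X : Finset α) : Finset α :=
  M.E.filter (fun x => M.rk (insert x X) = M.rk X)

/-- A flat is a closure-closed subset of the ground set. -/
def Flat (M : FinMatroid α) (F : Finset α) : Prop :=
  F ⊆ M.E ∧ M.cl F = F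

/-- A cyclic flat is a flat that is a union of circuits. -/
def CyclicFlat (M : FinMatroid α) (F : Finset α) : Prop :=
  M.Cyclic F ∧ M.Flat F

/-- Minimum distance d = min {|X| : ρ(E \ X) < ρ(E)}. -/
noncomputable def dist (M : FinMatroid α) : ℕ :=
  sInf {m | ∃ X, X ⊆ M.E ∧ X.card = m ∧ M.rk (M.E \ X) < M.rk M.E}

/-- S is an (r,δ)-locality set: |S| ≤ r + δ − 1 and
    min {|X| : X ⊆ S, ρ(S \ X) < ρ(S)} ≥ δ. -/
def LocalitySet (M : FinMatroid α) (r δ : ℕ) (S : Finset α) : Prop :=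
  S ⊆ M.E ∧ S.card ≤ r + δ - 1 ∧
    ∀ X, X ⊆ S → M.rk (S \ X) < M.rk S → δ ≤ X.card

/-- M has all-symbol (r,δ)-locality. -/
def HasLocality (M : FinMatroid α) (r δ : ℕ) : Prop :=
  ∀ x ∈ M.E, ∃ S, x ∈ S ∧ M.LocalitySet r δ S

/-- Restriction of M to X ⊆ E. -/
def restrict (M : FinMatroid α) (X : Finset α) (hX : X ⊆ M.E) : FinMatroid α where
  E := X
  rk := M.rk
  rk_le_card := fun Y hY => M.rk_le_card Y (hY.trans hX)
  rk_mono := fun Y Z h hZ => M.rk_mono Y Z h (hZ.trans hX)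
  rk_submod := fun Y Z hY hZ => M.rk_submod Y Z (hY.trans hX) (hZ.trans hX)

end FinMatroid


namespace FinMatroid
variable {α : Type*} [DecidableEq α] (M : FinMatroid α)

lemma rk_empty' : M.rk ∅ = 0 :=
  Nat.le_zero.mp (by simpa using M.rk_le_card ∅ (by simp))

lemma rk_insert_le' {U : Finset α} (hU : U ⊆ M.E) {x : α} (hx : x ∈ M.E) :
    M.rk (insert x U) ≤ M.rk U + 1 := by
  have h := M.rk_submod U {x} hU (by simpa using hx)
  have h1 : M.rk {x} ≤ 1 := by simpa using M.rk_le_card {x} (by simpa using hx)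
  have he : U ∪ {x} = insert x U := by ext y; simp [or_comm]
  rw [he] at h
  omega

lemma rk_union_no_incr {U : Finset α} (hU : U ⊆ M.E) :
    ∀ W : Finset α, W ⊆ M.E → (∀ x ∈ W, M.rk (insert x U) = M.rk U) →
      M.rk (U ∪ W) = M.rk U := by
  intro W
  induction W using Finset.induction with
  | empty => intro _ _; simp
  | @insert a W' ha ih =>
    intro hW h
    have haE : a ∈ M.E := hW (Finset.mem_insert_self a W')
    have hW'E : W' ⊆ M.E := fun y hy => hW (Finset.mem_insert_of_mem hy)
    have hUW' : M.rk (U ∪ W') = M.rk U :=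
      ih hW'E (fun x hx => h x (Finset.mem_insert_of_mem hx))
    have ha' : M.rk (insert a U) = M.rk U := h a (Finset.mem_insert_self a W')
    have h1 : U ∪ W' ⊆ M.E := Finset.union_subset hU hW'E
    have h2 : insert a U ⊆ M.E := Finset.insert_subset haE hU
    have hsub := M.rk_submod (U ∪ W') (insert a U) h1 h2
    have hXuY : (U ∪ W') ∪ insert a U = U ∪ insert a W' := by
      ext y; simp; tauto
    rw [hXuY] at hsub
    have hUsubXY : U ⊆ (U ∪ W') ∩ insert a U := by
      intro y hy; simp [hy]
    have h3 : M.rk U ≤ M.rk ((U ∪ W') ∩ insert a U) :=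
      M.rk_mono _ _ hUsubXY ((Finset.inter_subset_right).trans h2)
    have h4 : M.rk U ≤ M.rk (U ∪ insert a W') :=
      M.rk_mono _ _ Finset.subset_union_left
        (Finset.union_subset hU (Finset.insert_subset haE hW'E))
    omega

lemma exists_increase {U : Finset α} (hU : U ⊆ M.E) (h : M.rk U < M.rk M.E) :
    ∃ x ∈ M.E, M.rk U < M.rk (insert x U) := by
  by_contra hc
  push_neg at hc
  have hall : ∀ x ∈ M.E, M.rk (insert x U) = M.rk U := fun x hx =>
    le_antisymm (hc x hx)
      (M.rk_mono U _ (Finset.subset_insert _ _) (Finset.insert_subset hx hU))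
  have := M.rk_union_no_incr hU M.E subset_rfl hall
  rw [Finset.union_eq_right.mpr hU] at this
  omega

lemma girth {r δ : ℕ} (hδ : 2 ≤ δ) {S : Finset α} (hS : M.LocalitySet r δ S) :
    ∀ j (T : Finset α), T ⊆ S → S.card ≤ T.card + (δ - 1) + j →
      M.rk S ≤ M.rk T + j := by
  intro j
  induction j with
  | zero =>
    intro T hT hcard
    by_contra hlt
    push_neg at hlt
    have hrkT : M.rk T < M.rk S := by omega
    have hloc := hS.2.2 (S \ T) Finset.sdiff_subset ?_
    · have : (S \ T).card = S.card - T.card := Finset.card_sdiff_of_subset hT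
      have hTle : T.card ≤ S.card := Finset.card_le_card hT
      omega
    · rwa [Finset.sdiff_sdiff_self_left, Finset.inter_eq_right.mpr hT]
  | succ j ih =>
    intro T hT hcard
    by_cases h : S.card ≤ T.card + (δ - 1) + j
    · have := ih T hT h; omega
    · have hlt : T.card < S.card := by omega
      have : (S \ T).Nonempty := by
        rw [← Finset.card_pos, Finset.card_sdiff_of_subset hT]; omega
      obtain ⟨x, hx⟩ := this
      have hxS : x ∈ S := (Finset.mem_sdiff.mp hx).1
      have hxT : x ∉ T := (Finset.mem_sdiff.mp hx).2
      have hT' : insert x T ⊆ S := Finset.insert_subset hxS hT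
      have hcard' : S.card ≤ (insert x T).card + (δ - 1) + j := by
        rw [Finset.card_insert_of_notMem hxT]; omega
      have h1 := ih (insert x T) hT' hcard'
      have h2 := M.rk_insert_le' (hT.trans hS.1) (hS.1 hxS) (U := T) (x := x)
      omega

lemma step_lemma {r δ : ℕ} (hδ : 2 ≤ δ) {U : Finset α} (hU : U ⊆ M.E) {x : α}
    (hx : x ∈ M.E) (hinc : M.rk U < M.rk (insert x U)) {S : Finset α}
    (hxS : x ∈ S) (hS : M.LocalitySet r δ S) :
    U ∪ S ⊆ M.E ∧ M.rk U < M.rk (U ∪ S) ∧ M.rk (U ∪ S) ≤ M.rk U + r ∧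
      M.eta U + (δ - 1) ≤ M.eta (U ∪ S) := by
  have hSE : S ⊆ M.E := hS.1
  have hUSE : U ∪ S ⊆ M.E := Finset.union_subset hU hSE
  have hxE : x ∈ M.E := hSE hxS
  -- rank increases
  have hins : insert x U ⊆ U ∪ S := by
    intro y hy; rcases Finset.mem_insert.mp hy with h | h
    · exact Finset.mem_union_right _ (h ▸ hxS)
    · exact Finset.mem_union_left _ h
  have hinc2 : M.rk U < M.rk (U ∪ S) :=
    lt_of_lt_of_le hinc (M.rk_mono _ _ hins hUSE)
  -- rk {x} ≥ 1 hence rk S ≥ 1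
  have hsubx := M.rk_submod U {x} hU (by simpa using hxE)
  have he : U ∪ {x} = insert x U := by ext y; simp [or_comm]
  rw [he] at hsubx
  have hrkx : 1 ≤ M.rk {x} := by omega
  have hrkS1 : 1 ≤ M.rk S :=
    le_trans hrkx (M.rk_mono _ _ (by simpa using hxS) hSE)
  -- |S| ≥ δ - 1
  have hScard : δ - 1 ≤ S.card := by
    by_contra hc
    push_neg at hc
    have := hS.2.2 S subset_rfl (by
      rw [Finset.sdiff_self]; rw [M.rk_empty']; omega)
    omega
  -- rk S ≤ r
  have hrkSr : M.rk S ≤ r := by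
    obtain ⟨X, hXS, hXcard⟩ := Finset.exists_subset_card_eq hScard
    have hne : ¬ M.rk (S \ X) < M.rk S := by
      intro hlt
      have := hS.2.2 X hXS hlt; omega
    push_neg at hne
    have h1 : M.rk (S \ X) ≤ (S \ X).card :=
      M.rk_le_card _ (Finset.sdiff_subset.trans hSE)
    have h2 : (S \ X).card = S.card - X.card := Finset.card_sdiff_of_subset hXS
    have h3 := hS.2.1
    omega
  -- submodularity with T = U ∩ S
  have hsub := M.rk_submod U S hU hSE
  have hTS : U ∩ S ⊆ S := Finset.inter_subset_right
  have hrkT : M.rk (U ∩ S) < M.rk S := by omega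
  -- δ ≤ |S \ (U ∩ S)| = |S \ U|
  have hSTU : S \ (U ∩ S) = S \ U := by ext y; simp
  have hdel : δ ≤ (S \ U).card := by
    have := hS.2.2 (S \ (U ∩ S)) Finset.sdiff_subset (by
      rwa [Finset.sdiff_sdiff_self_left, Finset.inter_eq_right.mpr hTS])
    rwa [hSTU] at this
  -- girth
  have hcardST : (S \ (U ∩ S)).card = S.card - (U ∩ S).card :=
    Finset.card_sdiff_of_subset hTS
  have hTcard : (U ∩ S).card ≤ S.card := Finset.card_le_card hTS
  have hg := M.girth hδ hS ((S \ U).card - (δ - 1)) (U ∩ S) hTS (by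
    rw [hSTU] at hcardST; omega)
  -- rank increase bound via r
  have hrkr : M.rk (U ∪ S) ≤ M.rk U + r := by omega
  -- eta
  have hcardU : (U ∪ S).card = U.card + (S \ U).card := by
    rw [Finset.union_comm, ← Finset.card_sdiff_add_card]
    omega
  have hrk1 : M.rk U ≤ U.card := M.rk_le_card _ hU
  have hrk2 : M.rk (U ∪ S) ≤ (U ∪ S).card := M.rk_le_card _ hUSE
  refine ⟨hUSE, hinc2, hrkr, ?_⟩
  unfold eta
  omega


lemma phase1 {r δ : ℕ} (hk : 0 < M.rk M.E) (hr : 0 < r) (hδ : 2 ≤ δ)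
    (hloc : M.HasLocality r δ) :
    ∀ i, i ≤ (M.rk M.E + r - 1) / r - 1 →
      ∃ U, U ⊆ M.E ∧ M.rk U ≤ i * r ∧ i * (δ - 1) ≤ M.eta U := by
  set k := M.rk M.E with hkdef
  set t := (k + r - 1) / r with htdef
  have htr : t * r ≤ k + r - 1 := Nat.div_mul_le_self _ _
  intro i
  induction i with
  | zero =>
    intro _
    exact ⟨∅, by simp, by simp [M.rk_empty'], by simp [eta]⟩
  | succ i ih =>
    intro hi
    obtain ⟨U, hU, hrkU, hetaU⟩ := ih (by omega)
    have ht2 : 2 ≤ t := by omega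
    have hmul : i * r ≤ (t - 2) * r := Nat.mul_le_mul_right r (by omega)
    have hsm : (t - 2) * r = t * r - 2 * r := Nat.sub_mul t 2 r
    have hrkUk : M.rk U < k := by omega
    obtain ⟨x, hxE, hinc⟩ := M.exists_increase hU hrkUk
    obtain ⟨S, hxS, hS⟩ := hloc x hxE
    obtain ⟨hUSE, _, hrkr, heta⟩ := M.step_lemma hδ hU hxE hinc hxS hS
    exact ⟨U ∪ S, hUSE, by rw [Nat.succ_mul]; omega, by rw [Nat.succ_mul]; omega⟩

lemma phase2 : ∀ j (U : Finset α), U ⊆ M.E → M.rk U + j + 1 = M.rk M.E →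
    ∃ Y, Y ⊆ M.E ∧ M.rk Y + 1 = M.rk M.E ∧ M.eta U ≤ M.eta Y := by
  intro j
  induction j with
  | zero => intro U hU h; exact ⟨U, hU, by omega, le_rfl⟩
  | succ j ih =>
    intro U hU h
    obtain ⟨x, hxE, hinc⟩ := M.exists_increase hU (by omega)
    have hxU : x ∉ U := fun hxU => by simp [Finset.insert_eq_self.mpr hxU] at hinc
    have hle := M.rk_insert_le' hU hxE
    have hins : insert x U ⊆ M.E := Finset.insert_subset hxE hU
    have hrkeq : M.rk (insert x U) = M.rk U + 1 := by omega
    obtain ⟨Y, hY, hrkY, hetaY⟩ := ih (insert x U) hins (by omega)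
    refine ⟨Y, hY, hrkY, le_trans ?_ hetaY⟩
    unfold eta
    have h1 : M.rk U ≤ U.card := M.rk_le_card _ hU
    have h2 : (insert x U).card = U.card + 1 := Finset.card_insert_of_notMem hxU
    omega

end FinMatroid

theorem generalized_singleton_bound {α : Type*} [DecidableEq α] (M : FinMatroid α)
    (r δ : ℕ) (hk : 0 < M.rk M.E) (hr : 0 < r) (hrk : r ≤ M.rk M.E) (hδ : 2 ≤ δ)
    (hloc : M.HasLocality r δ) :
    M.dist ≤ M.E.card - M.rk M.E + 1 - ((M.rk M.E + r - 1) / r - 1) * (δ - 1) := by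
  set k := M.rk M.E with hkdef
  set n := M.E.card with hndef
  set t := (k + r - 1) / r with htdef
  have htr : t * r ≤ k + r - 1 := Nat.div_mul_le_self _ _
  have ht1 : 1 ≤ t := by
    rw [htdef]; rw [Nat.le_div_iff_mul_le hr]; omega
  obtain ⟨U, hU, hrkU, hetaU⟩ := M.phase1 hk hr hδ hloc (t - 1) le_rfl
  have hsm : (t - 1) * r = t * r - 1 * r := Nat.sub_mul t 1 r
  have hrkUk : M.rk U + 1 ≤ k := by omega
  obtain ⟨Y, hYE, hrkY, hetaY⟩ := M.phase2 (k - 1 - M.rk U) U hU (by omega)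
  have hkn : k ≤ n := M.rk_le_card _ subset_rfl
  have hrkYc : M.rk Y ≤ Y.card := M.rk_le_card _ hYE
  have hetaY' : (t - 1) * (δ - 1) ≤ M.eta Y := le_trans hetaU hetaY
  have hYcard : k - 1 + (t - 1) * (δ - 1) ≤ Y.card := by
    have : M.eta Y = Y.card - M.rk Y := rfl
    omega
  have hYn : Y.card ≤ n := Finset.card_le_card hYE
  have hmem : (M.E \ Y).card ∈
      {m | ∃ X, X ⊆ M.E ∧ X.card = m ∧ M.rk (M.E \ X) < M.rk M.E} := by
    refine ⟨M.E \ Y, Finset.sdiff_subset, rfl, ?_⟩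
    rw [Finset.sdiff_sdiff_eq_self hYE]
    omega
  have hdist : M.dist ≤ (M.E \ Y).card := Nat.sInf_le hmem
  have hcard : (M.E \ Y).card = n - Y.card := Finset.card_sdiff_of_subset hYE
  omega
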